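/- Let q ≥ 2 be an integer, c > ε/2 > 0 real numbers, and u, v ∈ ℤⁿ nonzero lattice points with v ≠ qu. Suppose N* ≥ 1 is an integer with (c − ε/2)·log_q(q − 1/N*) ≥ c − ε and |u| > N*. If |qu − v| ≥ 1, then (c − ε/2)·(log_q|v| + log_q|qu − v| − log_q|u|) ≥ c − ε, where |u| denotes the ℓ¹-norm u ↦ |u₁| + ... + |u_n|. -/
import Mathlib


open Finset in
/-- Let `q ≥ 2` be an integer, `c > ε/2 > 0` real numbers, and
`u, v ∈ ℤⁿ` nonzero lattice points with `v ≠ qu`.  Suppose `N* ≥ 1` is an integer with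
`(c − ε/2)·log_q(q − 1/N*) ≥ c − ε` and `|u| > N*`.  If `|qu − v| ≥ 1`, then
`(c − ε/2)·(log_q|v| + log_q|qu − v| − log_q|u|) ≥ c − ε`, where `|·|` is the `ℓ¹`-norm. -/
theorem stmt15 (q : ℕ) (hq : 2 ≤ q) (c ε : ℝ) (hε : 0 < ε) (hc : ε / 2 < c)
    (n : ℕ) (u v : Fin n → ℤ) (hu : u ≠ 0) (hv : v ≠ 0) (hvqu : v ≠ (q : ℤ) • u)
    (Nstar : ℕ) (hN1 : 1 ≤ Nstar)
    (hN : c - ε ≤ (c - ε / 2) * Real.logb q ((q : ℝ) - 1 / (Nstar : ℝ)))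
    (hU : (Nstar : ℝ) < ∑ i, |(u i : ℝ)|)
    (hquv : 1 ≤ ∑ i, |((q : ℝ) * (u i : ℝ) - (v i : ℝ))|) :
    c - ε ≤ (c - ε / 2) *
      (Real.logb q (∑ i, |(v i : ℝ)|) +
        Real.logb q (∑ i, |((q : ℝ) * (u i : ℝ) - (v i : ℝ))|) -
        Real.logb q (∑ i, |(u i : ℝ)|)) := by
  set A := ∑ i, |(v i : ℝ)| with hAdef
  set B := ∑ i, |((q : ℝ) * (u i : ℝ) - (v i : ℝ))| with hBdef
  set U := ∑ i, |(u i : ℝ)| with hUdef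
  have hq1 : (1 : ℝ) < (q : ℝ) := by exact_mod_cast lt_of_lt_of_le one_lt_two (by exact_mod_cast hq)
  -- A ≥ 1
  have hA1 : (1 : ℝ) ≤ A := by
    obtain ⟨i, hi⟩ := Function.ne_iff.mp hv
    have hi' : v i ≠ 0 := by simpa using hi
    have h1 : (1 : ℝ) ≤ |(v i : ℝ)| := by
      have h2 : (1 : ℤ) ≤ |v i| := Int.one_le_abs (by simpa using hi')
      calc (1:ℝ) = ((1:ℤ):ℝ) := by norm_num
        _ ≤ ((|v i| : ℤ) : ℝ) := by exact_mod_cast h2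
        _ = |(v i : ℝ)| := by push_cast; ring
    exact h1.trans (Finset.single_le_sum (f := fun j => |(v j : ℝ)|)
      (fun j _ => abs_nonneg _) (mem_univ i))
  have hNpos : (0 : ℝ) < (Nstar : ℝ) := by exact_mod_cast hN1
  have hU1 : (1 : ℝ) ≤ U := le_trans (by exact_mod_cast hN1) hU.le
  have hUpos : (0 : ℝ) < U := lt_of_lt_of_le zero_lt_one hU1
  -- triangle: q * U ≤ A + B
  have htri : (q : ℝ) * U ≤ A + B := by
    rw [hAdef, hBdef, hUdef, Finset.mul_sum, ← Finset.sum_add_distrib]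
    apply Finset.sum_le_sum
    intro i _
    have := abs_add_le ((v i : ℝ)) ((q : ℝ) * (u i : ℝ) - (v i : ℝ))
    calc (q:ℝ) * |(u i : ℝ)| = |(q:ℝ) * (u i : ℝ)| := by
          rw [abs_mul, abs_of_nonneg (by positivity : (0:ℝ) ≤ (q:ℝ))]
      _ = |(v i : ℝ) + ((q:ℝ) * (u i : ℝ) - (v i : ℝ))| := by ring_nf
      _ ≤ _ := this
  -- A*B ≥ A + B - 1 ≥ qU - 1
  have hAB : (q : ℝ) * U - 1 ≤ A * B := by
    nlinarith [mul_nonneg (sub_nonneg.mpr hA1) (sub_nonneg.mpr hquv)]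
  -- q - 1/Nstar ≤ A*B/U
  have hstep : (q : ℝ) - 1 / (Nstar : ℝ) ≤ A * B / U := by
    have h1 : (q : ℝ) - 1 / (Nstar : ℝ) ≤ (q : ℝ) - 1 / U := by
      have : 1 / U ≤ 1 / (Nstar : ℝ) := by
        apply one_div_le_one_div_of_le hNpos (le_trans (le_of_lt hU) le_rfl)
      linarith
    have h2 : (q : ℝ) - 1 / U ≤ A * B / U := by
      rw [le_div_iff₀ hUpos]
      have h3 : ((q : ℝ) - 1 / U) * U = (q : ℝ) * U - 1 := by field_simp
      linarith
    linarith
  have hqN : (0 : ℝ) < (q : ℝ) - 1 / (Nstar : ℝ) := by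
    have : 1 / (Nstar : ℝ) ≤ 1 := by
      rw [div_le_one hNpos]; exact_mod_cast hN1
    linarith
  have hlog : Real.logb q ((q : ℝ) - 1 / (Nstar : ℝ)) ≤ Real.logb q (A * B / U) :=
    Real.logb_le_logb_of_le hq1 hqN hstep
  have heq : Real.logb q (A * B / U) = Real.logb q A + Real.logb q B - Real.logb q U := by
    rw [Real.logb_div (by positivity) (by positivity), Real.logb_mul (by positivity) (by positivity)]
  have hcpos : (0 : ℝ) < c - ε / 2 := by linarith
  calc c - ε ≤ (c - ε / 2) * Real.logb q ((q : ℝ) - 1 / (Nstar : ℝ)) := hN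
    _ ≤ (c - ε / 2) * Real.logb q (A * B / U) := by
        exact mul_le_mul_of_nonneg_left hlog hcpos.le
    _ = _ := by rw [heq]
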